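/- For every μ ≥ -1/2 and all real numbers w and v, the one-dimensional Dunkl kernel satisfies |E_μ(iw, v)| ≤ 1. -/

import Mathlib

open MeasureTheory Real Filter

noncomputable section

/-- Normalized spherical Bessel function `j_μ(z)`. -/
def njBessel (μ z : ℝ) : ℂ :=
  (Real.Gamma (μ + 1) : ℂ) *
    ∑' n : ℕ, ((-1 : ℂ) ^ n * ((z : ℂ) / 2) ^ (2 * n)) /
      ((n.factorial : ℂ) * ((Real.Gamma ((n : ℝ) + μ + 1) : ℝ) : ℂ))

/-- One-dimensional Dunkl kernel `E_μ(i w, v)`. -/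
def dunklKernel (μ w v : ℝ) : ℂ :=
  njBessel μ (w * v) +
    Complex.I * (w : ℂ) * (v : ℂ) / (2 * ((μ : ℂ) + 1)) * njBessel (μ + 1) (w * v)

/-- The constant `c_μ = 1/(2^{μ+1} Γ(μ+1))`. -/
def dunklConst (μ : ℝ) : ℝ := 1 / ((2 : ℝ) ^ (μ + 1) * Real.Gamma (μ + 1))

/-- The weighted measure `|v|^{2μ+1} dv` on `ℝ`. -/
def dunklMeasure (μ : ℝ) : Measure ℝ :=
  volume.withDensity fun v => ENNReal.ofReal (|v| ^ (2 * μ + 1))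

/-- The Dunkl transform `D_μ[f](w) = c_μ ∫ E_μ(-iw, v) f(v) |v|^{2μ+1} dv`. -/
def dunklTransform (μ : ℝ) (f : ℝ → ℂ) (w : ℝ) : ℂ :=
  (dunklConst μ : ℂ) *
    ∫ v : ℝ, dunklKernel μ (-w) v * f v * ((|v| ^ (2 * μ + 1) : ℝ) : ℂ)

/-- The quadratic-phase Dunkl kernel `Ψ^{a,b,c}_{d,e,μ}(w, v)`. -/
def qpdKernel (a b c d e μ w v : ℝ) : ℂ :=
  Complex.exp (-Complex.I * ((a * v ^ 2 + c * w ^ 2 + d * v + e * w : ℝ) : ℂ)) *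
    dunklKernel μ (-(w / b)) v

/-- The quadratic-phase Dunkl transform `D^{a,b,c}_{d,e,μ}[f]`. -/
def qpdTransform (a b c d e μ : ℝ) (f : ℝ → ℂ) (w : ℝ) : ℂ :=
  ((dunklConst μ : ℂ) / (Complex.I * (b : ℂ)) ^ ((μ : ℂ) + 1)) *
    ∫ v : ℝ, qpdKernel a b c d e μ w v * f v * ((|v| ^ (2 * μ + 1) : ℝ) : ℂ)

namespace DunklAux

def bterm (μ x : ℝ) (n : ℕ) : ℝ :=
  (-1) ^ n * (x / 2) ^ (2 * n) / (n.factorial * Real.Gamma ((n : ℝ) + μ + 1))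

def dterm (μ x : ℝ) (n : ℕ) : ℝ :=
  (-1) ^ n * ((n : ℝ) * (x / 2) ^ (2 * n - 1)) / (n.factorial * Real.Gamma ((n : ℝ) + μ + 1))

def S (μ x : ℝ) : ℝ := ∑' n : ℕ, bterm μ x n

def J (μ x : ℝ) : ℝ := Real.Gamma (μ + 1) * S μ x

lemma gamma_arg_pos {μ : ℝ} (hμ : -1 < μ) (n : ℕ) : 0 < (n : ℝ) + μ + 1 := by
  have : (0 : ℝ) ≤ n := n.cast_nonneg
  linarith

lemma gamma_pos {μ : ℝ} (hμ : -1 < μ) (n : ℕ) : 0 < Real.Gamma ((n : ℝ) + μ + 1) :=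
  Real.Gamma_pos_of_pos (gamma_arg_pos hμ n)

lemma one_le_gamma {x : ℝ} (hx : 2 ≤ x) : 1 ≤ Real.Gamma x := by
  rcases eq_or_lt_of_le hx with h | h
  · rw [← h, Real.Gamma_two]
  · calc (1 : ℝ) = Real.Gamma 2 := Real.Gamma_two.symm
      _ ≤ Real.Gamma x :=
        (Real.Gamma_strictMonoOn_Ici (by norm_num) (le_of_lt h) h).le

lemma summable_master {μ : ℝ} (hμ : -1 < μ) {c : ℝ} (hc : 0 ≤ c) :
    Summable (fun n : ℕ =>
      ((n : ℝ) + 1) * c ^ n / (n.factorial * Real.Gamma ((n : ℝ) + μ + 1))) := by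
  rw [← summable_nat_add_iff 2]
  have hs : Summable (fun n : ℕ => (2 * c) ^ (n + 2) / (n + 2).factorial) :=
    (summable_nat_add_iff 2).mpr (Real.summable_pow_div_factorial (2 * c))
  refine hs.of_nonneg_of_le (fun n => ?_) (fun n => ?_)
  · have h1 := gamma_pos hμ (n + 2)
    positivity
  · have hΓ : 1 ≤ Real.Gamma (((n + 2 : ℕ) : ℝ) + μ + 1) := by
      apply one_le_gamma
      push_cast
      have : (0 : ℝ) ≤ n := n.cast_nonneg
      linarith
    have hfac : (0 : ℝ) < (n + 2).factorial := by positivity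
    have hnum : ((n + 2 : ℕ) : ℝ) + 1 ≤ 2 ^ (n + 2) := by
      have h := Nat.lt_two_pow_self (n := n + 2)
      exact_mod_cast Nat.succ_le_of_lt h
    have hnum2 : (((n + 2 : ℕ) : ℝ) + 1) * c ^ (n + 2) ≤ (2 * c) ^ (n + 2) := by
      rw [mul_pow]
      exact mul_le_mul_of_nonneg_right hnum (pow_nonneg hc _)
    calc (((n + 2 : ℕ) : ℝ) + 1) * c ^ (n + 2) /
          ((n + 2).factorial * Real.Gamma (((n + 2 : ℕ) : ℝ) + μ + 1))
        ≤ (2 * c) ^ (n + 2) / ((n + 2).factorial * 1) := by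
          apply div_le_div₀ (by positivity) hnum2 (by positivity)
          nlinarith [le_mul_of_one_le_right hfac.le hΓ]
      _ = (2 * c) ^ (n + 2) / (n + 2).factorial := by rw [mul_one]

lemma norm_bterm_le {μ : ℝ} (hμ : -1 < μ) (x : ℝ) (n : ℕ) :
    ‖bterm μ x n‖ ≤ ((n : ℝ) + 1) * ((x / 2) ^ 2) ^ n /
      (n.factorial * Real.Gamma ((n : ℝ) + μ + 1)) := by
  have hΓ := gamma_pos hμ n
  have hden : (0 : ℝ) < n.factorial * Real.Gamma ((n : ℝ) + μ + 1) := by positivity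
  rw [bterm, Real.norm_eq_abs, abs_div, abs_mul, abs_pow, abs_pow, abs_neg, abs_one,
    one_pow, one_mul, abs_of_pos hden]
  have ht : |x / 2| ^ (2 * n) = ((x / 2) ^ 2) ^ n := by rw [pow_mul, sq_abs]
  rw [ht]
  apply div_le_div₀ (by positivity) _ hden le_rfl
  have hn1 : (1 : ℝ) ≤ (n : ℝ) + 1 := by
    have : (0 : ℝ) ≤ n := n.cast_nonneg
    linarith
  exact le_mul_of_one_le_left (by positivity) hn1

lemma summable_bterm {μ : ℝ} (hμ : -1 < μ) (x : ℝ) : Summable (bterm μ x) :=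
  Summable.of_norm_bounded (summable_master hμ (sq_nonneg (x / 2))) (norm_bterm_le hμ x)

lemma norm_dterm_le {μ : ℝ} (hμ : -1 < μ) {R y : ℝ} (hR : 1 ≤ R) (hy : |y| ≤ R) (n : ℕ) :
    ‖dterm μ y n‖ ≤ 2 * (((n : ℝ) + 1) * ((R / 2) ^ 2) ^ n /
      (n.factorial * Real.Gamma ((n : ℝ) + μ + 1))) := by
  have hΓ := gamma_pos hμ n
  have hden : (0 : ℝ) < n.factorial * Real.Gamma ((n : ℝ) + μ + 1) := by positivity
  have hR0 : (0 : ℝ) < R := lt_of_lt_of_le one_pos hR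
  rw [dterm, Real.norm_eq_abs, abs_div, abs_mul, abs_mul, abs_pow, abs_neg, abs_one,
    one_pow, one_mul, abs_pow, Nat.abs_cast, abs_of_pos hden, mul_div_assoc']
  apply div_le_div₀ (by positivity) _ hden le_rfl
  match n with
  | 0 => simp
  | (m + 1) =>
    have h2 : 2 * (m + 1) - 1 = 2 * m + 1 := by omega
    rw [h2]
    have hy2 : |y / 2| ≤ R / 2 := by
      rw [abs_div, abs_two]
      linarith
    have hyb : |y / 2| ^ (2 * m + 1) ≤ (R / 2) ^ (2 * m + 1) :=
      pow_le_pow_left₀ (abs_nonneg _) hy2 _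
    have hexp : ((R / 2) ^ 2) ^ (m + 1) = (R / 2) ^ (2 * m + 1) * (R / 2) := by
      rw [← pow_mul, show 2 * (m + 1) = (2 * m + 1) + 1 from by ring, pow_succ]
    rw [hexp]
    have ht0 : (0 : ℝ) ≤ (R / 2) ^ (2 * m + 1) := by positivity
    push_cast
    nlinarith [mul_le_mul_of_nonneg_left hyb (by positivity : (0:ℝ) ≤ (m : ℝ) + 1),
      mul_nonneg ht0 (by linarith : (0:ℝ) ≤ R - 1),
      (Nat.cast_nonneg m : (0:ℝ) ≤ (m:ℝ))]

lemma summable_dterm {μ : ℝ} (hμ : -1 < μ) (x : ℝ) : Summable (dterm μ x) := by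
  have hR : 1 ≤ |x| + 1 := by linarith [abs_nonneg x]
  exact Summable.of_norm_bounded
    ((summable_master hμ (sq_nonneg ((|x| + 1) / 2))).mul_left 2)
    (fun n => norm_dterm_le hμ hR (by linarith) n)

lemma hasDerivAt_bterm (μ : ℝ) (n : ℕ) (x : ℝ) :
    HasDerivAt (fun y => bterm μ y n) (dterm μ x n) x := by
  have h1 : HasDerivAt (fun y : ℝ => y / 2) (1 / 2) x := by
    simpa using (hasDerivAt_id x).div_const 2
  have h2 := ((h1.pow (2 * n)).div_const
    ((n.factorial : ℝ) * Real.Gamma ((n : ℝ) + μ + 1))).const_mul ((-1 : ℝ) ^ n)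
  have hfun : (fun y => bterm μ y n) =
      fun y => (-1 : ℝ) ^ n * ((y / 2) ^ (2 * n) /
        ((n.factorial : ℝ) * Real.Gamma ((n : ℝ) + μ + 1))) := by
    funext y; rw [bterm]; ring
  rw [hfun]
  refine h2.congr_deriv ?_
  rw [dterm]
  push_cast
  ring

lemma hasDerivAt_S_aux {μ : ℝ} (hμ : -1 < μ) (x : ℝ) :
    HasDerivAt (S μ) (∑' n, dterm μ x n) x := by
  set R := |x| + 1 with hRdef
  have hR1 : 1 ≤ R := by rw [hRdef]; linarith [abs_nonneg x]
  have hu : Summable (fun n : ℕ => 2 * (((n : ℝ) + 1) * ((R / 2) ^ 2) ^ n /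
      (n.factorial * Real.Gamma ((n : ℝ) + μ + 1)))) :=
    (summable_master hμ (sq_nonneg _)).mul_left 2
  have hmem : x ∈ Set.Ioo (-R) R := by
    constructor
    · rw [hRdef]; linarith [neg_abs_le x]
    · rw [hRdef]; linarith [le_abs_self x]
  exact hasDerivAt_tsum_of_isPreconnected hu isOpen_Ioo (convex_Ioo _ _).isPreconnected
    (fun n y _ => hasDerivAt_bterm μ n y)
    (fun n y hy => norm_dterm_le hμ hR1 (le_of_lt (abs_lt.mpr ⟨hy.1, hy.2⟩)) n)
    hmem (summable_bterm hμ x) hmem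

lemma tsum_dterm {μ : ℝ} (hμ : -1 < μ) (x : ℝ) :
    ∑' n, dterm μ x n = -(x / 2) * S (μ + 1) x := by
  rw [Summable.tsum_eq_zero_add (summable_dterm hμ x)]
  have h0 : dterm μ x 0 = 0 := by simp [dterm]
  rw [h0, zero_add, S, ← tsum_mul_left]
  apply tsum_congr
  intro m
  have harg : ((m + 1 : ℕ) : ℝ) + μ + 1 = (m : ℝ) + (μ + 1) + 1 := by push_cast; ring
  have h2 : 2 * (m + 1) - 1 = 2 * m + 1 := by omega
  have hΓ : Real.Gamma ((m : ℝ) + (μ + 1) + 1) ≠ 0 := ne_of_gt (gamma_pos (by linarith) m)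
  have hfacm : ((m.factorial : ℝ)) ≠ 0 := by positivity
  rw [dterm, bterm, harg, h2, Nat.factorial_succ]
  push_cast
  field_simp
  ring

lemma hasDerivAt_S {μ : ℝ} (hμ : -1 < μ) (x : ℝ) :
    HasDerivAt (S μ) (-(x / 2) * S (μ + 1) x) x :=
  tsum_dterm hμ x ▸ hasDerivAt_S_aux hμ x

lemma hasDerivAt_J {μ : ℝ} (hμ : -1 < μ) (x : ℝ) :
    HasDerivAt (J μ) (-(x / (2 * (μ + 1))) * J (μ + 1) x) x := by
  have hne : μ + 1 ≠ 0 := by linarith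
  have h := (hasDerivAt_S hμ x).const_mul (Real.Gamma (μ + 1))
  have hfun : J μ = fun y => Real.Gamma (μ + 1) * S μ y := rfl
  rw [hfun]
  refine h.congr_deriv ?_
  rw [J, Real.Gamma_add_one hne]
  field_simp

lemma S_recur {μ : ℝ} (hμ : -1 < μ) (x : ℝ) :
    (μ + 1) * S (μ + 1) x - S μ x = (x / 2) ^ 2 * S (μ + 2) x := by
  have hne : μ + 1 ≠ 0 := by linarith
  have h1 : Summable (fun n => (μ + 1) * bterm (μ + 1) x n) :=
    (summable_bterm (by linarith) x).mul_left _
  have h2 := summable_bterm hμ x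
  have hb : Summable (fun n => (μ + 1) * bterm (μ + 1) x n - bterm μ x n) := h1.sub h2
  have hL : (μ + 1) * S (μ + 1) x - S μ x =
      ∑' n, ((μ + 1) * bterm (μ + 1) x n - bterm μ x n) := by
    rw [S, S, ← tsum_mul_left, ← Summable.tsum_sub h1 h2]
  rw [hL, Summable.tsum_eq_zero_add hb]
  have hzero : (μ + 1) * bterm (μ + 1) x 0 - bterm μ x 0 = 0 := by
    simp only [bterm, pow_zero, Nat.factorial_zero, Nat.cast_zero, Nat.cast_one, zero_add,
      one_mul, mul_one]
    rw [Real.Gamma_add_one hne]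
    have hΓ : Real.Gamma (μ + 1) ≠ 0 := (Real.Gamma_pos_of_pos (by linarith)).ne'
    field_simp
    simp
  rw [hzero, zero_add, S, ← tsum_mul_left]
  apply tsum_congr
  intro m
  have hApos : (0 : ℝ) < (m : ℝ) + μ + 2 := by
    have : (0 : ℝ) ≤ m := m.cast_nonneg
    linarith
  have hΓA : (0 : ℝ) < Real.Gamma ((m : ℝ) + μ + 2) := by
    have := gamma_pos hμ m
    have e : ((m : ℝ) + μ + 2) = ((m : ℝ) + μ + 1) + 1 := by ring
    rw [e, Real.Gamma_add_one (ne_of_gt (gamma_arg_pos hμ m))]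
    exact mul_pos (gamma_arg_pos hμ m) this
  have e1 : ((m + 1 : ℕ) : ℝ) + (μ + 1) + 1 = ((m : ℝ) + μ + 2) + 1 := by push_cast; ring
  have e2 : ((m + 1 : ℕ) : ℝ) + μ + 1 = (m : ℝ) + μ + 2 := by push_cast; ring
  have e3 : (m : ℝ) + (μ + 2) + 1 = ((m : ℝ) + μ + 2) + 1 := by ring
  rw [bterm, bterm, bterm, e1, e2, e3, Real.Gamma_add_one (ne_of_gt hApos),
    Nat.factorial_succ, show 2 * (m + 1) = 2 * m + 2 from by ring, pow_add, pow_succ]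
  have hfacm : ((m.factorial : ℝ)) ≠ 0 := by positivity
  push_cast
  field_simp
  ring

lemma J_recur {μ : ℝ} (hμ : -1 < μ) (x : ℝ) :
    (x / 2) ^ 2 * J (μ + 2) x = (μ + 1) * (μ + 2) * (J (μ + 1) x - J μ x) := by
  have hne1 : μ + 1 ≠ 0 := by linarith
  have hne2 : μ + 2 ≠ 0 := by linarith
  have h := S_recur hμ x
  rw [J, J, J, show (μ : ℝ) + 2 + 1 = (μ + 2) + 1 from by ring,
    Real.Gamma_add_one hne2, Real.Gamma_add_one hne1,
    show Real.Gamma (μ + 2) = (μ + 1) * Real.Gamma (μ + 1) from by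
      rw [show (μ : ℝ) + 2 = (μ + 1) + 1 from by ring, Real.Gamma_add_one hne1]]
  linear_combination (-((μ + 1) * (μ + 2) * Real.Gamma (μ + 1))) * h

def F (μ x : ℝ) : ℝ := (J μ x) ^ 2 + (x / (2 * (μ + 1)) * J (μ + 1) x) ^ 2

lemma hasDerivAt_F {μ : ℝ} (hμ : -1 < μ) (x : ℝ) :
    HasDerivAt (F μ)
      (-(2 * μ + 1) * x * (J (μ + 1) x) ^ 2 / (2 * (μ + 1) ^ 2)) x := by
  have hne1 : μ + 1 ≠ 0 := by linarith
  have hne2 : μ + 2 ≠ 0 := by linarith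
  have h1 := hasDerivAt_J hμ x
  have h2 : HasDerivAt (J (μ + 1)) (-(x / (2 * (μ + 2))) * J (μ + 2) x) x := by
    have h := hasDerivAt_J (show (-1 : ℝ) < μ + 1 by linarith) x
    rwa [show (μ : ℝ) + 1 + 1 = μ + 2 from by ring] at h
  have ha : HasDerivAt (fun y : ℝ => y / (2 * (μ + 1))) (1 / (2 * (μ + 1))) x := by
    simpa using (hasDerivAt_id x).div_const (2 * (μ + 1))
  have hg := ha.mul h2
  have hkey : x / (2 * (μ + 1)) * (-(x / (2 * (μ + 2))) * J (μ + 2) x) =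
      J μ x - J (μ + 1) x := by
    have hrec := J_recur hμ x
    field_simp
    linear_combination (-4 : ℝ) * hrec
  rw [hkey] at hg
  have hF := (h1.pow 2).add (hg.pow 2)
  have hfun : F μ = fun y => (J μ y) ^ 2 + (y / (2 * (μ + 1)) * J (μ + 1) y) ^ 2 := rfl
  rw [hfun]
  refine hF.congr_deriv ?_
  simp only [Pi.mul_apply]
  norm_num
  field_simp
  ring

lemma J_even (μ x : ℝ) : J μ (-x) = J μ x := by
  unfold J S
  congr 1
  apply tsum_congr
  intro n
  rw [bterm, bterm, neg_div, Even.neg_pow (even_two_mul n)]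

lemma F_even (μ x : ℝ) : F μ (-x) = F μ x := by
  unfold F
  rw [J_even, J_even]
  ring

lemma J_zero {μ : ℝ} (hμ : -1 < μ) : J μ 0 = 1 := by
  have hΓ : Real.Gamma (μ + 1) ≠ 0 := (Real.Gamma_pos_of_pos (by linarith)).ne'
  rw [J, S, tsum_eq_single 0]
  · simp only [bterm, pow_zero, Nat.factorial_zero, Nat.cast_zero, Nat.cast_one, zero_add,
      one_mul, mul_one, mul_zero]
    field_simp
  · intro n hn
    have h2 : 2 * n ≠ 0 := by omega
    simp [bterm, h2]

lemma F_zero {μ : ℝ} (hμ : -1 < μ) : F μ 0 = 1 := by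
  simp [F, J_zero hμ]

lemma F_le_one {μ : ℝ} (hμ : -1 / 2 ≤ μ) (x : ℝ) : F μ x ≤ 1 := by
  have hμ' : -1 < μ := by linarith
  suffices h : ∀ y : ℝ, 0 ≤ y → F μ y ≤ 1 by
    rcases le_or_gt 0 x with hx | hx
    · exact h x hx
    · rw [← F_even]; exact h (-x) (by linarith)
  intro y hy
  have hanti : AntitoneOn (F μ) (Set.Ici 0) := by
    apply antitoneOn_of_deriv_nonpos (convex_Ici 0)
    · intro z _
      exact (hasDerivAt_F hμ' z).differentiableAt.continuousAt.continuousWithinAt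
    · intro z _
      exact (hasDerivAt_F hμ' z).differentiableAt.differentiableWithinAt
    · intro z hz
      rw [interior_Ici] at hz
      rw [(hasDerivAt_F hμ' z).deriv]
      have hz0 : (0 : ℝ) < z := hz
      apply div_nonpos_of_nonpos_of_nonneg
      · have hpr : (0:ℝ) ≤ (2 * μ + 1) * z * (J (μ + 1) z) ^ 2 :=
          mul_nonneg (mul_nonneg (by linarith) hz0.le) (sq_nonneg _)
        nlinarith [hpr]
      · positivity
  have h := hanti (Set.mem_Ici.mpr le_rfl) (Set.mem_Ici.mpr hy) hy
  rwa [F_zero hμ'] at h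

end DunklAux

lemma DunklAux.njBessel_eq (μ z : ℝ) : njBessel μ z = ((DunklAux.J μ z : ℝ) : ℂ) := by
  rw [njBessel, DunklAux.J, DunklAux.S, Complex.ofReal_mul, Complex.ofReal_tsum]
  congr 1
  apply tsum_congr
  intro n
  rw [DunklAux.bterm]
  push_cast
  ring

theorem dunklKernel_abs_le_one (μ : ℝ) (hμ : -1/2 ≤ μ) (w v : ℝ) :
    ‖dunklKernel μ w v‖ ≤ 1 := by
  have hμ' : -1 < μ := by linarith
  have key : dunklKernel μ w v =
      ((DunklAux.J μ (w * v) : ℝ) : ℂ) +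
        ((w * v / (2 * (μ + 1)) * DunklAux.J (μ + 1) (w * v) : ℝ) : ℂ) * Complex.I := by
    rw [dunklKernel, DunklAux.njBessel_eq, DunklAux.njBessel_eq]
    push_cast
    ring
  rw [key, Complex.norm_add_mul_I, Real.sqrt_le_one]
  exact DunklAux.F_le_one hμ (w * v)
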